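/- (Regret matching⁺ regret bound) Consider an online decision process over the simplex Δ^m with linear loss vectors ℓ^t ∈ [0, L]^m. Regret matching⁺ maintains pseudoregrets q^{1:t} = max(0, q^{1:t−1} + ρ^t) componentwise, with q^{1:0} = 0 and instantaneous regret ρ^t = ⟨ℓ^t, σ^t⟩·1 − ℓ^t, playing σ^t = q^{1:t−1}/(1ᵀq^{1:t−1}) when 1ᵀq^{1:t−1} > 0 and the uniform distribution otherwise. Then after T rounds, the cumulative regret max_{σ ∈ Δ^m} Σ_{t=1}^T (⟨ℓ^t, σ^t⟩ − ⟨ℓ^t, σ⟩) is at most L·√(Tm). -/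

import Mathlib

/-!
Regret matching⁺ plays a strategy proportional to its pseudoregret vector `q`, so `q` is
orthogonal to the next instantaneous regret `ρ`. Clipping `q + ρ` at `0` does not increase its
norm, hence `‖q‖²` grows by at most `‖ρ‖² ≤ m L²` per round and `‖q^{1:T}‖ ≤ L √(T m)`. Since
clipping only increases coordinates, `q^{1:T}` dominates the cumulative regret vector
`∑ₜ ρᵗ`, whose average under a comparator `σ` is the regret against `σ`.
-/

open Finset Matrix

theorem nonneg_of_eq_max_zero_add {x r : ℕ → ℝ} (h0 : x 0 = 0)
    (hx : ∀ t, x (t + 1) = max 0 (x t + r t)) (n : ℕ) : 0 ≤ x n := by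
  cases n with
  | zero => exact h0.ge
  | succ n => exact hx n ▸ le_max_left _ _

theorem sum_range_le_of_eq_max_zero_add {x r : ℕ → ℝ} (h0 : x 0 = 0)
    (hx : ∀ t, x (t + 1) = max 0 (x t + r t)) (n : ℕ) : ∑ t ∈ range n, r t ≤ x n := by
  induction n with
  | zero => simp [h0]
  | succ n ih => rw [sum_range_succ, hx]; exact (add_le_add_left ih _).trans (le_max_right _ _)

theorem le_mul_of_forall_succ_le_add {a : ℕ → ℝ} {C : ℝ} (h0 : a 0 ≤ 0)
    (ha : ∀ t, a (t + 1) ≤ a t + C) (n : ℕ) : a n ≤ n * C := by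
  induction n with
  | zero => simpa using h0
  | succ n ih => push_cast; linarith [ha n]

theorem max_zero_mul_self_le (x : ℝ) : max 0 x * max 0 x ≤ x * x := by
  rcases le_total 0 x with h | h
  · rw [max_eq_right h]
  · rw [max_eq_left h, zero_mul]; exact mul_self_nonneg x

section

variable {ι : Type*} [Fintype ι]

theorem dotProduct_mem_Icc_of_mem_stdSimplex {ℓ σ : ι → ℝ} {a b : ℝ}
    (hℓ : ∀ i, ℓ i ∈ Set.Icc a b) (hσ : σ ∈ stdSimplex ℝ ι) : ℓ ⬝ᵥ σ ∈ Set.Icc a b := by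
  rw [dotProduct_comm]
  exact (convex_Icc a b).sum_mem (fun i _ => hσ.1 i) hσ.2 fun i _ => hℓ i

theorem dotProduct_le_sqrt_dotProduct_self {σ x : ι → ℝ} (hσ : σ ∈ stdSimplex ℝ ι) :
    σ ⬝ᵥ x ≤ √(x ⬝ᵥ x) :=
  (convex_Iic _).sum_mem (fun i _ => hσ.1 i) hσ.2 fun i _ => (le_abs_self _).trans <|
    Real.abs_le_sqrt <| (sq (x i)).symm ▸ single_le_sum (f := fun j => x j * x j)
      (fun j _ => mul_self_nonneg (x j)) (mem_univ i)

namespace RegretMatchingPlus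

def instantRegret (ℓ σ : ι → ℝ) : ι → ℝ := fun i => ℓ ⬝ᵥ σ - ℓ i

def IsRegretMatchingStrategy (q σ : ι → ℝ) : Prop :=
  (0 < ∑ i, q i ∧ ∀ i, σ i = q i / ∑ j, q j) ∨ (¬ 0 < ∑ i, q i ∧ ∀ i, σ i = 1 / Fintype.card ι)

theorem dotProduct_instantRegret {ℓ σ σ' : ι → ℝ} (hσ' : ∑ i, σ' i = 1) :
    σ' ⬝ᵥ instantRegret ℓ σ = ℓ ⬝ᵥ σ - ℓ ⬝ᵥ σ' := by
  simp only [instantRegret, dotProduct, mul_sub, sum_sub_distrib, ← sum_mul, hσ', one_mul]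
  simp only [mul_comm]

theorem smul_dotProduct_instantRegret_self {ℓ σ : ι → ℝ} (hσ : ∑ i, σ i = 1) (c : ℝ) :
    (c • σ) ⬝ᵥ instantRegret ℓ σ = 0 := by
  rw [smul_dotProduct, dotProduct_instantRegret hσ, sub_self, smul_zero]

theorem dotProduct_self_instantRegret_le {ℓ σ : ι → ℝ} {a b : ℝ} (hℓ : ∀ i, ℓ i ∈ Set.Icc a b)
    (hσ : σ ∈ stdSimplex ℝ ι) :
    instantRegret ℓ σ ⬝ᵥ instantRegret ℓ σ ≤ Fintype.card ι * (b - a) ^ 2 := by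
  obtain ⟨hσa, hσb⟩ := dotProduct_mem_Icc_of_mem_stdSimplex hℓ hσ
  have hρ (i : ι) : |instantRegret ℓ σ i| ≤ b - a :=
    abs_sub_le_of_le_of_le hσa hσb (hℓ i).1 (hℓ i).2
  calc instantRegret ℓ σ ⬝ᵥ instantRegret ℓ σ ≤ ∑ _ : ι, (b - a) ^ 2 :=
        sum_le_sum fun i _ => by
          rw [← abs_mul_abs_self, ← sq]; exact pow_le_pow_left₀ (abs_nonneg _) (hρ i) 2
    _ = Fintype.card ι * (b - a) ^ 2 := by rw [sum_const, card_univ, nsmul_eq_mul]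

theorem IsRegretMatchingStrategy.mem_stdSimplex_and_eq_smul [Nonempty ι] {q σ : ι → ℝ}
    (hσ : IsRegretMatchingStrategy q σ) (hq : 0 ≤ q) :
    σ ∈ stdSimplex ℝ ι ∧ q = (∑ i, q i) • σ := by
  rcases hσ with ⟨hpos, hσ⟩ | ⟨hpos, hσ⟩
  · refine ⟨⟨fun i => hσ i ▸ div_nonneg (hq i) hpos.le, ?_⟩, ?_⟩
    · simp only [hσ, ← sum_div, div_self hpos.ne']
    · ext i; simp only [hσ, Pi.smul_apply, smul_eq_mul, mul_div_cancel₀ _ hpos.ne']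
  · have hq0 : q = 0 := by
      ext i
      exact (sum_eq_zero_iff_of_nonneg fun j _ => hq j).1
        (le_antisymm (not_lt.1 hpos) (sum_nonneg fun j _ => hq j)) i (mem_univ i)
    refine ⟨⟨fun i => hσ i ▸ by positivity, ?_⟩, by simp [hq0]⟩
    simp [hσ]

theorem dotProduct_self_max_zero_add_le {q ρ : ι → ℝ} (h : q ⬝ᵥ ρ = 0) :
    (fun i => max 0 (q i + ρ i)) ⬝ᵥ (fun i => max 0 (q i + ρ i)) ≤ q ⬝ᵥ q + ρ ⬝ᵥ ρ :=
  calc _ ≤ (q + ρ) ⬝ᵥ (q + ρ) := sum_le_sum fun i _ => max_zero_mul_self_le (q i + ρ i)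
    _ = q ⬝ᵥ q + ρ ⬝ᵥ ρ := by
      rw [add_dotProduct, dotProduct_add, dotProduct_add, dotProduct_comm ρ q, h]; ring

theorem dotProduct_self_max_zero_add_instantRegret_le [Nonempty ι] {ℓ q σ : ι → ℝ} {a b : ℝ}
    (hℓ : ∀ i, ℓ i ∈ Set.Icc a b) (hq : 0 ≤ q)
    (hσ : IsRegretMatchingStrategy q σ) :
    (fun i => max 0 (q i + instantRegret ℓ σ i)) ⬝ᵥ (fun i => max 0 (q i + instantRegret ℓ σ i))
      ≤ q ⬝ᵥ q + Fintype.card ι * (b - a) ^ 2 := by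
  obtain ⟨hσ, hqσ⟩ := hσ.mem_stdSimplex_and_eq_smul hq
  refine (dotProduct_self_max_zero_add_le ?_).trans
    (add_le_add_right (dotProduct_self_instantRegret_le hℓ hσ) _)
  rw [hqσ]
  exact smul_dotProduct_instantRegret_self hσ.2 _

end RegretMatchingPlus

end

open RegretMatchingPlus

/-- Regret matching⁺ regret bound for linear losses in `[0, L]^m`:
cumulative regret after `T` rounds is at most `L√(Tm)`. -/
theorem regret_matching_plus_bound (m T : ℕ) (hm : 0 < m) (L : ℝ) (hL : 0 ≤ L)
    (ℓ : ℕ → Fin m → ℝ) (hℓ : ∀ t i, ℓ t i ∈ Set.Icc (0 : ℝ) L)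
    (σ q : ℕ → Fin m → ℝ)
    (hq0 : q 0 = 0)
    (hσ : ∀ t, (0 < ∑ i, q t i ∧ ∀ i, σ t i = q t i / ∑ j, q t j) ∨
               (¬ 0 < ∑ i, q t i ∧ ∀ i, σ t i = 1 / m))
    (hqrec : ∀ t i,
      q (t + 1) i = max 0 (q t i + ((∑ j, ℓ t j * σ t j) - ℓ t i)))
    (σ' : Fin m → ℝ) (hσ' : σ' ∈ stdSimplex ℝ (Fin m)) :
    ∑ t ∈ Finset.range T, ((∑ i, ℓ t i * σ t i) - ∑ i, ℓ t i * σ' i) ≤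
      L * Real.sqrt ((T : ℝ) * m) := by
  have : Nonempty (Fin m) := Fin.pos_iff_nonempty.1 hm
  have hq_nonneg (t : ℕ) : 0 ≤ q t := fun i =>
    nonneg_of_eq_max_zero_add (x := (q · i)) (congrFun hq0 i) (fun t => hqrec t i) t
  have hnorm : q T ⬝ᵥ q T ≤ T * (m * L ^ 2) := by
    refine le_mul_of_forall_succ_le_add (a := fun t => q t ⬝ᵥ q t) (by simp [hq0]) (fun t => ?_) T
    have hround := dotProduct_self_max_zero_add_instantRegret_le (hℓ t) (hq_nonneg t)
      (by simpa only [IsRegretMatchingStrategy, Fintype.card_fin] using hσ t)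
    rw [Fintype.card_fin, sub_zero] at hround
    rwa [show q (t + 1) = _ from funext (hqrec t)]
  have hcum : ∑ t ∈ range T, instantRegret (ℓ t) (σ t) ≤ q T := fun i => by
    rw [Finset.sum_apply]
    exact sum_range_le_of_eq_max_zero_add (x := (q · i)) (congrFun hq0 i) (fun t => hqrec t i) T
  calc _ = σ' ⬝ᵥ ∑ t ∈ range T, instantRegret (ℓ t) (σ t) := by
        rw [dotProduct_sum]
        exact sum_congr rfl fun t _ => (dotProduct_instantRegret hσ'.2).symm
    _ ≤ σ' ⬝ᵥ q T := dotProduct_le_dotProduct_of_nonneg_left hcum hσ'.1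
    _ ≤ √(q T ⬝ᵥ q T) := dotProduct_le_sqrt_dotProduct_self hσ'
    _ ≤ √(T * (m * L ^ 2)) := Real.sqrt_le_sqrt hnorm
    _ = L * √(T * m) := by
      rw [← mul_assoc, Real.sqrt_mul' _ (sq_nonneg L), Real.sqrt_sq hL, mul_comm]
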